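/- arXiv:2601.13900 — 8 statements merged into one kernel-verified Lean document; each statement's English description precedes it below -/
import Mathlib

section
/- Any partition of the edges of the complete graph K_n on n vertices into complete bipartite graphs (bicliques) uses at least n−1 bicliques. -/
/-!
If `n - 1 > k`, the `k + 1` linear conditions `∑ x = 0` and `∑_{i ∈ A t} x i = 0` have a
nonzero common real solution `x`. Since every edge `ij` lies in exactly one biclique,
`(∑ x)² = ∑ x² + 2 ∑_t (∑_{A t} x)(∑_{B t} x)`, so the solution satisfies `∑ x² = 0`,
which is absurd.
-/

open Finset

lemma exists_ne_zero_forall_sum_indicator_eq_zero {K V ι : Type*} [Field K] [Fintype V]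
    [Fintype ι] (s : ι → Set V) (h : Fintype.card ι < Fintype.card V) :
    ∃ x : V → K, x ≠ 0 ∧ ∀ t, ∑ i, (s t).indicator x i = 0 := by
  let f : (V → K) →ₗ[K] ι → K :=
    { toFun := fun x t => ∑ i, (s t).indicator x i
      map_add' := fun x y => by ext t; simp [Set.indicator_add', sum_add_distrib]
      map_smul' := fun c x => by
        ext t
        simp only [Pi.smul_apply, smul_eq_mul, mul_sum]
        exact sum_congr rfl fun i _ => Set.indicator_const_smul_apply (s t) c x i }
  have hker : LinearMap.ker f ≠ ⊥ :=
    LinearMap.ker_ne_bot_of_finrank_lt (by simpa [Module.finrank_fintype_fun_eq_card] using h)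
  obtain ⟨x, hx, hx0⟩ := (Submodule.ne_bot_iff _).mp hker
  exact ⟨x, hx0, fun t => congrFun hx t⟩

def IsBicliquePartition {V ι : Type*} (A B : ι → Set V) : Prop :=
  (∀ t, Disjoint (A t) (B t)) ∧
    ∀ i j, i ≠ j → ∃! t, (i ∈ A t ∧ j ∈ B t) ∨ (j ∈ A t ∧ i ∈ B t)

variable {V ι : Type*} [Fintype ι]

namespace IsBicliquePartition

variable {A B : ι → Set V} {R : Type*} [CommRing R]

lemma sum_indicator_mul_indicator_add_swap [DecidableEq V] (hP : IsBicliquePartition A B)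
    (x : V → R) (i j : V) :
    ∑ t, ((A t).indicator x i * (B t).indicator x j + (A t).indicator x j * (B t).indicator x i)
      = if i = j then 0 else x i * x j := by
  classical
  have hterm : ∀ t, (A t).indicator x i * (B t).indicator x j
      + (A t).indicator x j * (B t).indicator x i
        = if (i ∈ A t ∧ j ∈ B t) ∨ (j ∈ A t ∧ i ∈ B t) then x i * x j else 0 := by
    intro t
    -- disjointness of `A t` and `B t` keeps the two products from being nonzero at once
    have hd := Set.disjoint_left.mp (hP.1 t)
    simp only [Set.indicator_apply]
    split_ifs <;> simp_all [mul_comm]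
  rw [sum_congr rfl fun t _ => hterm t, ← sum_filter, sum_const, nsmul_eq_mul]
  split_ifs with hij
  · subst hij
    have hempty : #{t | i ∈ A t ∧ i ∈ B t} = 0 :=
      card_eq_zero.2 <| filter_eq_empty_iff.2 fun t _ h => Set.disjoint_left.1 (hP.1 t) h.1 h.2
    simp [hempty]
  · rw [(Fintype.existsUnique_iff_card_one _).mp (hP.2 i j hij)]
    simp

variable [Fintype V]

lemma sq_sum_eq_sum_sq_add (hP : IsBicliquePartition A B) (x : V → R) :
    (∑ i, x i) ^ 2 =
      ∑ i, x i ^ 2 + 2 * ∑ t, (∑ i, (A t).indicator x i) * ∑ j, (B t).indicator x j := by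
  classical
  have hcross : 2 * ∑ t, (∑ i, (A t).indicator x i) * ∑ j, (B t).indicator x j
      = ∑ i, ∑ j, if i = j then 0 else x i * x j := by
    simp_rw [← hP.sum_indicator_mul_indicator_add_swap x, sum_add_distrib, sum_mul_sum]
    rw [sum_comm (f := fun i j => ∑ t, (A t).indicator x j * (B t).indicator x i), ← two_mul]
    exact congrArg _ sum_comm_cycle.symm
  rw [hcross, sq, sum_mul_sum]
  simp [sum_ite, filter_ne, sq]

lemma eq_zero_of_sum_eq_zero [LinearOrder R] [IsStrictOrderedRing R]
    (hP : IsBicliquePartition A B) {x : V → R} (hx : ∑ i, x i = 0)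
    (hA : ∀ t, ∑ i, (A t).indicator x i = 0) : x = 0 := by
  have hsq : ∑ i, x i ^ 2 = 0 := by simpa [hx, hA] using (hP.sq_sum_eq_sum_sq_add x).symm
  funext i
  exact pow_eq_zero_iff two_ne_zero |>.mp <|
    congrFun ((Fintype.sum_eq_zero_iff_of_nonneg fun i => sq_nonneg (x i)).mp hsq) i

theorem card_sub_one_le (hP : IsBicliquePartition A B) :
    Fintype.card V - 1 ≤ Fintype.card ι := by
  by_contra! h
  -- the extra index `none` carries the condition `∑ x = 0`
  obtain ⟨x, hx0, hx⟩ := exists_ne_zero_forall_sum_indicator_eq_zero (K := ℝ)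
    (fun o : Option ι => o.elim Set.univ A) (by rw [Fintype.card_option]; omega)
  exact hx0 <| hP.eq_zero_of_sum_eq_zero (by simpa using hx none) fun t => hx (some t)

end IsBicliquePartition

/-- **Graham–Pollak theorem.** Any partition of the edges of the complete graph `K_n`
into bicliques (complete bipartite graphs, given by disjoint vertex sets `A t`, `B t`,
each edge of `K_n` lying in exactly one biclique) uses at least `n - 1` bicliques. -/
theorem graham_pollak (n k : ℕ) (A B : Fin k → Set (Fin n))
    (hdisj : ∀ t, Disjoint (A t) (B t))
    (hpart : ∀ i j : Fin n, i ≠ j →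
      ∃! t, (i ∈ A t ∧ j ∈ B t) ∨ (j ∈ A t ∧ i ∈ B t)) :
    n - 1 ≤ k := by
  simpa using IsBicliquePartition.card_sub_one_le ⟨hdisj, hpart⟩
end

section
/- If F is an isolation set of order k in a 0,1 matrix M (meaning no k+1 elements of F lie in a common monochromatic all-ones rectangle of M), then the Boolean rank and the binary rank of M are each at least |F|/k. -/
open Function Set

section Defs

variable {α β : Type*}

/-- A `0,1` matrix with integer entries. -/
def ZeroOne (M : Matrix α β ℤ) : Prop := ∀ i j, M i j = 0 ∨ M i j = 1

/-- A monochromatic all-ones combinatorial rectangle of `M`. -/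
def IsOnesRect (M : Matrix α β ℤ) (S : Set (α × β)) : Prop :=
  (∃ (R : Set α) (C : Set β), S = R ×ˢ C) ∧ ∀ p ∈ S, M p.1 p.2 = 1

/-- The set of `1`-entries of `M`. -/
def onesOf (M : Matrix α β ℤ) : Set (α × β) := {p | M p.1 p.2 = 1}

/-- Minimum number of monochromatic all-ones rectangles covering the ones of `M`. -/
noncomputable def coverNum (M : Matrix α β ℤ) : ℕ :=
  sInf {k | ∃ f : Fin k → Set (α × β), (∀ t, IsOnesRect M (f t)) ∧ (⋃ t, f t) = onesOf M}

/-- Minimum number of pairwise disjoint monochromatic all-ones rectangles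
partitioning the ones of `M`. -/
noncomputable def partitionNum (M : Matrix α β ℤ) : ℕ :=
  sInf {k | ∃ f : Fin k → Set (α × β), (∀ t, IsOnesRect M (f t)) ∧
    (Pairwise fun s t => Disjoint (f s) (f t)) ∧ (⋃ t, f t) = onesOf M}

end Defs

/-!
Every all-ones rectangle contains at most `k` elements of `F`, while a cover of the ones of `M`
by `N` rectangles covers all of `F`; hence `|F| ≤ N k`. A partition is in particular a cover, so
the same bound holds for the binary rank.
-/

theorem Finset.card_le_card_mul_of_subset_iUnion {σ ι : Type*} [Fintype ι] {F : Finset σ}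
    {f : ι → Set σ} {k : ℕ} (hcov : (↑F : Set σ) ⊆ ⋃ t, f t)
    (hk : ∀ t, ∀ T ⊆ F, (↑T : Set σ) ⊆ f t → T.card ≤ k) :
    F.card ≤ Fintype.card ι * k := by
  classical
  have hF : F ⊆ Finset.univ.biUnion fun t => F.filter (· ∈ f t) := by
    intro p hp
    obtain ⟨t, ht⟩ := Set.mem_iUnion.mp (hcov hp)
    exact Finset.mem_biUnion.mpr ⟨t, Finset.mem_univ _, Finset.mem_filter.mpr ⟨hp, ht⟩⟩
  calc F.card ≤ (Finset.univ.biUnion fun t => F.filter (· ∈ f t)).card := Finset.card_le_card hF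
    _ ≤ Finset.univ.card * k :=
        Finset.card_biUnion_le_card_mul _ _ _ fun t _ =>
          hk t _ (Finset.filter_subset _ _) fun _ hp => (Finset.mem_filter.mp hp).2
    _ = Fintype.card ι * k := by rw [Finset.card_univ]

section Rectangles

variable {α β : Type*}

theorem isOnesRect_singleton {M : Matrix α β ℤ} {p : α × β} (hp : M p.1 p.2 = 1) :
    IsOnesRect M {p} :=
  ⟨⟨{p.1}, {p.2}, Set.singleton_prod_singleton.symm⟩, fun _ hq => (Set.mem_singleton_iff.mp hq) ▸ hp⟩

/-- Singletons of the `1`-entries; needed because `sInf ∅ = 0` in `coverNum` and `partitionNum`. -/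
theorem exists_ones_partition [Finite α] [Finite β] (M : Matrix α β ℤ) :
    ∃ N, ∃ f : Fin N → Set (α × β), (∀ t, IsOnesRect M (f t)) ∧
      (Pairwise fun s t => Disjoint (f s) (f t)) ∧ (⋃ t, f t) = onesOf M := by
  obtain ⟨N, ⟨e⟩⟩ := Finite.exists_equiv_fin (onesOf M)
  refine ⟨N, fun t => {(e.symm t : α × β)}, fun t => isOnesRect_singleton (e.symm t).2,
    fun s t hst => Set.disjoint_singleton.mpr fun h => hst (e.symm.injective (Subtype.ext h)), ?_⟩
  ext p
  simp only [Set.mem_iUnion, Set.mem_singleton_iff]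
  refine ⟨?_, fun hp => ⟨e ⟨p, hp⟩, by simp⟩⟩
  rintro ⟨t, rfl⟩
  exact (e.symm t).2

theorem partitionNum_mem [Finite α] [Finite β] (M : Matrix α β ℤ) :
    ∃ f : Fin (partitionNum M) → Set (α × β), (∀ t, IsOnesRect M (f t)) ∧
      (Pairwise fun s t => Disjoint (f s) (f t)) ∧ (⋃ t, f t) = onesOf M :=
  Nat.sInf_mem (exists_ones_partition M)

theorem coverNum_mem [Finite α] [Finite β] (M : Matrix α β ℤ) :
    ∃ f : Fin (coverNum M) → Set (α × β), (∀ t, IsOnesRect M (f t)) ∧ (⋃ t, f t) = onesOf M := by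
  obtain ⟨N, f, hrect, -, hcov⟩ := exists_ones_partition M
  exact Nat.sInf_mem (s := {N | ∃ f : Fin N → Set (α × β), (∀ t, IsOnesRect M (f t)) ∧
    (⋃ t, f t) = onesOf M}) ⟨N, f, hrect, hcov⟩

theorem coverNum_le_partitionNum [Finite α] [Finite β] (M : Matrix α β ℤ) :
    coverNum M ≤ partitionNum M := by
  obtain ⟨f, hrect, -, hcov⟩ := partitionNum_mem M
  exact Nat.sInf_le ⟨f, hrect, hcov⟩

theorem card_le_coverNum_mul [Finite α] [Finite β] (M : Matrix α β ℤ) (k : ℕ)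
    (F : Finset (α × β)) (hones : ∀ p ∈ F, M p.1 p.2 = 1)
    (horder : ∀ S : Set (α × β), IsOnesRect M S →
      ∀ T : Finset (α × β), T ⊆ F → (↑T : Set (α × β)) ⊆ S → T.card ≤ k) :
    F.card ≤ coverNum M * k := by
  obtain ⟨f, hrect, hcov⟩ := coverNum_mem M
  simpa using Finset.card_le_card_mul_of_subset_iUnion (f := f) (hcov ▸ hones)
    fun t => horder (f t) (hrect t)

end Rectangles

theorem order_k_isolation_bound_general {n m : ℕ} (M : Matrix (Fin n) (Fin m) ℤ)
    (k : ℕ) (F : Finset (Fin n × Fin m))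
    (hones : ∀ p ∈ F, M p.1 p.2 = 1)
    (horder : ∀ S : Set (Fin n × Fin m), IsOnesRect M S →
      ∀ T : Finset (Fin n × Fin m), T ⊆ F → (↑T : Set (Fin n × Fin m)) ⊆ S →
        T.card ≤ k) :
    (F.card : ℝ) / k ≤ coverNum M ∧ (F.card : ℝ) / k ≤ partitionNum M := by
  have hcard := card_le_coverNum_mul M k F hones horder
  have hcover : (F.card : ℝ) / k ≤ coverNum M :=
    div_le_of_le_mul₀ k.cast_nonneg (Nat.cast_nonneg _) (by exact_mod_cast hcard)
  exact ⟨hcover, hcover.trans (by exact_mod_cast coverNum_le_partitionNum M)⟩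

/-- If `F` is an isolation set of order `k` in a `0,1` matrix `M` (a set of
`1`-entries such that no `k+1` of its elements lie in a common monochromatic
all-ones rectangle), then the Boolean rank and the binary rank of `M` are each
at least `|F| / k`. -/
theorem order_k_isolation_bound {n m : ℕ} (M : Matrix (Fin n) (Fin m) ℤ)
    (hM : ZeroOne M) (k : ℕ) (F : Finset (Fin n × Fin m))
    (hones : ∀ p ∈ F, M p.1 p.2 = 1)
    (horder : ∀ S : Set (Fin n × Fin m), IsOnesRect M S →
      ∀ T : Finset (Fin n × Fin m), T ⊆ F → (↑T : Set (Fin n × Fin m)) ⊆ S →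
        T.card ≤ k) :
    (F.card : ℝ) / k ≤ coverNum M ∧ (F.card : ℝ) / k ≤ partitionNum M :=
  order_k_isolation_bound_general M k F hones horder
end

section
/- Let M be a 0,1 matrix of size n×m whose rows, viewed as subsets of {1,...,m}, form an antichain (no row's support is contained in another row's support). Then the Boolean rank of M is at least σ(n), where σ(n) is the least d with n ≤ C(d, ⌊d/2⌋). -/
open Function Set

/-- The Boolean rank of a `0,1` matrix: the minimal `d` such that `M = X * Y` for
`0,1` matrices under Boolean arithmetic. -/
noncomputable def boolFactRank {n m : ℕ} (M : Matrix (Fin n) (Fin m) ℤ) : ℕ :=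
  sInf {d | ∃ (X : Matrix (Fin n) (Fin d) ℤ) (Y : Matrix (Fin d) (Fin m) ℤ),
    ZeroOne X ∧ ZeroOne Y ∧ ∀ i j, M i j = 1 ↔ ∃ t, X i t = 1 ∧ Y t j = 1}

/-- `σ(n)` is the least `d` with `n ≤ C(d, ⌊d/2⌋)`. -/
noncomputable def sigmaFn (n : ℕ) : ℕ := sInf {d | n ≤ Nat.choose d (d / 2)}

/-!
Take a Boolean factorization `M = X · Y` of minimal inner dimension `d`. If the support of row
`i` of `X` is contained in that of row `i'`, then so is the support of row `i` of `M`, because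
every `1` of `M` is witnessed through `X`. Hence the row supports of `X` form an antichain of `n`
subsets of a `d`-element set, and Sperner's theorem gives `n ≤ C(d, ⌊d/2⌋)`.
-/

section BooleanFactorization

variable {α β γ : Type*}

lemma exists_boolFactorization_self (M : Matrix α β ℤ) [DecidableEq β] :
    ∃ (X : Matrix α β ℤ) (Y : Matrix β β ℤ),
      ZeroOne X ∧ ZeroOne Y ∧ ∀ i j, M i j = 1 ↔ ∃ t, X i t = 1 ∧ Y t j = 1 := by
  refine ⟨fun i j => if M i j = 1 then 1 else 0, fun t j => if t = j then 1 else 0,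
    fun i j => ?_, fun t j => ?_, fun i j => ?_⟩
  · by_cases h : M i j = 1 <;> simp [h]
  · by_cases h : t = j <;> simp [h]
  · simp

lemma exists_boolFactorization_boolFactRank {n m : ℕ} (M : Matrix (Fin n) (Fin m) ℤ) :
    ∃ (X : Matrix (Fin n) (Fin (boolFactRank M)) ℤ)
      (Y : Matrix (Fin (boolFactRank M)) (Fin m) ℤ),
      ZeroOne X ∧ ZeroOne Y ∧ ∀ i j, M i j = 1 ↔ ∃ t, X i t = 1 ∧ Y t j = 1 :=
  Nat.sInf_mem (s := {d | ∃ (X : Matrix (Fin n) (Fin d) ℤ) (Y : Matrix (Fin d) (Fin m) ℤ),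
    ZeroOne X ∧ ZeroOne Y ∧ ∀ i j, M i j = 1 ↔ ∃ t, X i t = 1 ∧ Y t j = 1})
    ⟨m, exists_boolFactorization_self M⟩

lemma row_ones_mono_of_boolFactorization {M : Matrix α β ℤ} {X : Matrix α γ ℤ}
    {Y : Matrix γ β ℤ} (hfac : ∀ i j, M i j = 1 ↔ ∃ t, X i t = 1 ∧ Y t j = 1) {i i' : α}
    (hX : ∀ t, X i t = 1 → X i' t = 1) : ∀ j, M i j = 1 → M i' j = 1 := by
  intro j hij
  obtain ⟨t, hXt, hYt⟩ := (hfac i j).1 hij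
  exact (hfac i' j).2 ⟨t, hX t hXt, hYt⟩

end BooleanFactorization

lemma Fintype.card_le_choose_of_not_subset {ι α : Type*} [Fintype ι] [Fintype α]
    {f : ι → Finset α} (hf : ∀ i i', i ≠ i' → ¬ f i ⊆ f i') :
    Fintype.card ι ≤ (Fintype.card α).choose (Fintype.card α / 2) := by
  classical
  have hinj : Function.Injective f := fun i i' h => by
    by_contra hne
    exact hf i i' hne h.subset
  have hanti : IsAntichain (· ⊆ ·) (SetLike.coe (Finset.univ.image f)) := by
    simp only [Finset.coe_image, Finset.coe_univ, Set.image_univ]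
    rintro _ ⟨i, rfl⟩ _ ⟨i', rfl⟩ hne
    exact hf i i' fun h => hne (congrArg f h)
  simpa [Finset.card_image_of_injective _ hinj] using hanti.sperner

lemma sigmaFn_le_of_le_choose {n d : ℕ} (h : n ≤ d.choose (d / 2)) : sigmaFn n ≤ d :=
  Nat.sInf_le h

theorem antichain_boolRank_lower_general {n m : ℕ} (M : Matrix (Fin n) (Fin m) ℤ)
    (hanti : ∀ i i' : Fin n, i ≠ i' → ¬ ∀ j, M i j = 1 → M i' j = 1) :
    sigmaFn n ≤ boolFactRank M := by
  obtain ⟨X, Y, -, -, hfac⟩ := exists_boolFactorization_boolFactRank M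
  have hrows : ∀ i i', i ≠ i' →
      ¬ Finset.univ.filter (X i · = 1) ⊆ Finset.univ.filter (X i' · = 1) := by
    intro i i' hne hsub
    refine hanti i i' hne (row_ones_mono_of_boolFactorization hfac fun t ht => ?_)
    simpa using hsub (by simpa using ht)
  apply sigmaFn_le_of_le_choose
  simpa using Fintype.card_le_choose_of_not_subset hrows

/-- If the rows of a `0,1` matrix `M`, viewed as subsets of the columns via
their supports, form an antichain (no row's support is contained in another
row's support), then the Boolean rank of `M` is at least `σ(n)`. -/
theorem antichain_boolRank_lower {n m : ℕ} (M : Matrix (Fin n) (Fin m) ℤ)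
    (hM : ZeroOne M)
    (hanti : ∀ i i' : Fin n, i ≠ i' → ¬ ∀ j, M i j = 1 → M i' j = 1) :
    sigmaFn n ≤ boolFactRank M :=
  antichain_boolRank_lower_general M hanti
end

section
/- Let C_n be the n×n 0,1 matrix with zeros on the main diagonal and ones elsewhere (the complement of the identity matrix), n ≥ 2. Then the Boolean rank of C_n equals σ(n), the least d with n ≤ C(d, ⌊d/2⌋). -/
open Function Set

/-- The matrix `C_n`: zeros on the main diagonal and ones elsewhere. -/
def Cmat (n : ℕ) : Matrix (Fin n) (Fin n) ℤ := fun i j => if i = j then 0 else 1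

/-!
A Boolean factorization `C_n = X · Y` of inner dimension `d` is the same thing as a family of
`n` pairwise incomparable subsets of `{1, …, d}`: row `i` of `X` is the indicator of a set `A i`,
and column `j` of `Y` must then be the indicator of the complement of `A j`, since
`(X · Y) i j = 1` says exactly that `A i ⊄ A j`. Such families of size `n` exist iff
`n ≤ C(d, ⌊d/2⌋)`: by Sperner's theorem for necessity, and by taking `⌊d/2⌋`-subsets for
sufficiency. Hence both ranks are the infimum of the same set.
-/

def HasBoolFactorization {n m : ℕ} (M : Matrix (Fin n) (Fin m) ℤ) (d : ℕ) : Prop :=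
  ∃ (X : Matrix (Fin n) (Fin d) ℤ) (Y : Matrix (Fin d) (Fin m) ℤ),
    ZeroOne X ∧ ZeroOne Y ∧ ∀ i j, M i j = 1 ↔ ∃ t, X i t = 1 ∧ Y t j = 1

lemma boolFactRank_eq_sInf {n m : ℕ} (M : Matrix (Fin n) (Fin m) ℤ) :
    boolFactRank M = sInf {d | HasBoolFactorization M d} := rfl

lemma Cmat_eq_one_iff {n : ℕ} (i j : Fin n) : Cmat n i j = 1 ↔ i ≠ j := by
  by_cases h : i = j <;> simp [Cmat, h]

lemma hasBoolFactorization_Cmat_iff (n d : ℕ) :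
    HasBoolFactorization (Cmat n) d ↔
      ∃ A : Fin n → Finset (Fin d), ∀ i j, A i ⊆ A j ↔ i = j := by
  classical
  constructor
  · rintro ⟨X, Y, -, -, hXY⟩
    refine ⟨fun i => {t | X i t = 1}, fun i j => ⟨fun hsub => ?_, fun h => h ▸ subset_rfl⟩⟩
    by_contra hij
    obtain ⟨t, hXi, hYj⟩ := (hXY i j).1 ((Cmat_eq_one_iff i j).2 hij)
    have hXj : X j t = 1 := by simpa using hsub (by simpa using hXi)
    exact (Cmat_eq_one_iff j j).1 ((hXY j j).2 ⟨t, hXj, hYj⟩) rfl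
  · rintro ⟨A, hA⟩
    refine ⟨fun i t => if t ∈ A i then 1 else 0, fun t j => if t ∈ A j then 0 else 1,
      fun i t => by dsimp only; split_ifs <;> simp,
      fun t j => by dsimp only; split_ifs <;> simp, fun i j => ?_⟩
    rw [Cmat_eq_one_iff, ne_eq, ← not_congr (hA i j), Finset.not_subset]
    simp

lemma exists_subset_iff_eq_iff_card_le_choose (ι α : Type*) [Fintype ι] [Fintype α] :
    (∃ A : ι → Finset α, ∀ i j, A i ⊆ A j ↔ i = j) ↔
      Fintype.card ι ≤ (Fintype.card α).choose (Fintype.card α / 2) := by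
  classical
  constructor
  · rintro ⟨A, hA⟩
    have hAinj : Injective A := fun i j h => (hA i j).1 h.le
    have hanti : IsAntichain (· ⊆ ·) (Finset.univ.image A : Set (Finset α)) := by
      simp only [Finset.coe_image, Finset.coe_univ, Set.image_univ]
      rintro _ ⟨i, rfl⟩ _ ⟨j, rfl⟩ hne hsub
      exact hne (congrArg A ((hA i j).1 hsub))
    simpa [Finset.card_image_of_injective _ hAinj] using hanti.sperner
  · intro hcard
    rw [← Fintype.card_finset_len] at hcard
    obtain ⟨e⟩ := Function.Embedding.nonempty_of_card_le hcard
    refine ⟨fun i => (e i).1, fun i j => ⟨fun hsub => e.injective ?_, fun h => h ▸ subset_rfl⟩⟩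
    exact Subtype.ext (Finset.eq_of_subset_of_card_le hsub (by rw [(e i).2, (e j).2]))

theorem boolRank_Cmat_general (n : ℕ) : boolFactRank (Cmat n) = sigmaFn n := by
  rw [boolFactRank_eq_sInf, sigmaFn]
  congr 1
  ext d
  simpa using (hasBoolFactorization_Cmat_iff n d).trans
    (exists_subset_iff_eq_iff_card_le_choose (Fin n) (Fin d))

/-- For `n ≥ 2`, the Boolean rank of `C_n` equals `σ(n)`, the least `d` with
`n ≤ C(d, ⌊d/2⌋)`. -/
theorem boolRank_Cmat (n : ℕ) (hn : 2 ≤ n) : boolFactRank (Cmat n) = sigmaFn n :=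
  boolRank_Cmat_general n
end

section
/- Let G be a graph with m edges containing a matching of size s. Then any cover of the edges of G by complete bipartite subgraphs (bicliques) requires at least s²/m bicliques. -/
/-!
Send each matching edge `t` to a biclique `f t` covering it, oriented as `(a t, b t)` with
`a t ∈ A (f t)` and `b t ∈ B (f t)`. Whenever `f t = f t'` the pair `a t, b t'` is an edge,
and since the matching edges share no vertex, `(t, t') ↦ s(a t, b t')` is injective. Hence
`∑ᵢ kᵢ² ≤ m`, where `kᵢ` is the number of matching edges sent to biclique `i`, while
Cauchy–Schwarz gives `s² = (∑ᵢ kᵢ)² ≤ r ∑ᵢ kᵢ²`.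
-/

open Finset

theorem card_filter_apply_fst_eq_apply_snd {α β : Type*} [Fintype α] [Fintype β] [DecidableEq β]
    (f : α → β) : #{q : α × α | f q.1 = f q.2} = ∑ b, #{x | f x = b} ^ 2 := by
  rw [card_eq_sum_card_fiberwise (f := fun q => f q.1) (t := univ) fun _ _ => mem_univ _]
  refine sum_congr rfl fun b _ => ?_
  rw [sq, ← card_product]
  congr 1
  ext q
  simp only [mem_filter, mem_product, mem_univ, true_and]
  constructor
  · rintro ⟨h, rfl⟩
    exact ⟨rfl, h.symm⟩
  · rintro ⟨h₁, h₂⟩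
    exact ⟨h₁.trans h₂.symm, h₁⟩

theorem sq_card_le_card_mul_card_filter_apply_fst_eq_apply_snd {α β : Type*} [Fintype α]
    [Fintype β] [DecidableEq β] (f : α → β) :
    Fintype.card α ^ 2 ≤ Fintype.card β * #{q : α × α | f q.1 = f q.2} := by
  have hfib : Fintype.card α = ∑ b, #{x | f x = b} :=
    card_eq_sum_card_fiberwise fun _ _ => mem_univ _
  rw [card_filter_apply_fst_eq_apply_snd, hfib]
  exact sq_sum_le_card_mul_sum_sq

theorem SimpleGraph.card_filter_adj_le_card_edgeFinset {V ι κ : Type*} [Fintype V]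
    [DecidableEq V] (G : SimpleGraph V) [DecidableRel G.Adj] [Fintype ι] [Fintype κ]
    {a : ι → V} {b : κ → V} (ha : a.Injective) (hb : b.Injective) (hab : ∀ i j, a i ≠ b j) :
    #{q : ι × κ | G.Adj (a q.1) (b q.2)} ≤ #G.edgeFinset := by
  refine card_le_card_of_injOn (fun q => s(a q.1, b q.2)) (fun q hq => ?_) fun q _ q' _ h => ?_
  · simpa using hq
  · rcases Sym2.eq_iff.mp h with ⟨h₁, h₂⟩ | ⟨h₁, -⟩
    · exact Prod.ext (ha h₁) (hb h₂)
    · exact absurd h₁ (hab _ _)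

theorem eq_of_common_endpoint {V ι : Type*} {e : ι → V × V}
    (hdisj : ∀ t t', t ≠ t' → (e t).1 ≠ (e t').1 ∧ (e t).1 ≠ (e t').2 ∧
      (e t).2 ≠ (e t').1 ∧ (e t).2 ≠ (e t').2)
    {t t' : ι} {x : V} (hx : x = (e t).1 ∨ x = (e t).2) (hx' : x = (e t').1 ∨ x = (e t').2) :
    t = t' := by
  by_contra hne
  obtain ⟨h₁, h₂, h₃, h₄⟩ := hdisj t t' hne
  rcases hx with rfl | rfl <;> rcases hx' with h | h <;> contradiction

/-- Let `G` be a graph with `m` edges containing a matching of size `s` (a family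
of `s` pairwise vertex-disjoint edges). Then any cover of the edges of `G` by
complete bipartite subgraphs (bicliques) requires at least `s² / m` bicliques. -/
theorem biclique_cover_lower_bound {V : Type*} [Fintype V] [DecidableEq V]
    (G : SimpleGraph V) [DecidableRel G.Adj] (s r : ℕ)
    (e : Fin s → V × V)
    (hmatch : ∀ t, G.Adj (e t).1 (e t).2)
    (hdisj : ∀ t t', t ≠ t' → (e t).1 ≠ (e t').1 ∧ (e t).1 ≠ (e t').2 ∧
      (e t).2 ≠ (e t').1 ∧ (e t).2 ≠ (e t').2)
    (A B : Fin r → Set V)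
    (hbic : ∀ t, ∀ a ∈ A t, ∀ b ∈ B t, G.Adj a b)
    (hcover : ∀ u v, G.Adj u v →
      ∃ t, (u ∈ A t ∧ v ∈ B t) ∨ (v ∈ A t ∧ u ∈ B t)) :
    (s : ℝ) ^ 2 / (G.edgeFinset.card : ℝ) ≤ (r : ℝ) := by
  have horient : ∀ t, ∃ i, ∃ a ∈ A i, ∃ b ∈ B i,
      (a = (e t).1 ∨ a = (e t).2) ∧ (b = (e t).1 ∨ b = (e t).2) := fun t => by
    obtain ⟨i, ⟨hu, hv⟩ | ⟨hv, hu⟩⟩ := hcover _ _ (hmatch t)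
    exacts [⟨i, _, hu, _, hv, .inl rfl, .inr rfl⟩, ⟨i, _, hv, _, hu, .inr rfl, .inl rfl⟩]
  choose f a ha b hb hae hbe using horient
  have hadj : ∀ t t', f t = f t' → G.Adj (a t) (b t') := fun t t' h =>
    hbic _ _ (ha t) _ (h ▸ hb t')
  have hab : ∀ t t', a t ≠ b t' := fun t t' h => by
    obtain rfl := eq_of_common_endpoint hdisj (hae t) (h ▸ hbe t')
    exact (hadj t t rfl).ne h
  have ha_inj : a.Injective := fun t t' h =>
    eq_of_common_endpoint hdisj (hae t) (h ▸ hae t')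
  have hb_inj : b.Injective := fun t t' h =>
    eq_of_common_endpoint hdisj (hbe t) (h ▸ hbe t')
  have hpairs : #{q : Fin s × Fin s | f q.1 = f q.2} ≤ #G.edgeFinset :=
    (card_le_card (monotone_filter_right _ fun q _ h => hadj q.1 q.2 h)).trans <|
      G.card_filter_adj_le_card_edgeFinset ha_inj hb_inj hab
  have hsq : s ^ 2 ≤ r * #G.edgeFinset := by
    simpa using (sq_card_le_card_mul_card_filter_apply_fst_eq_apply_snd f).trans
      (Nat.mul_le_mul_left _ hpairs)
  exact div_le_of_le_mul₀ (by positivity) (by positivity) (by exact_mod_cast hsq)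
end

section
/- Let M be a 0,1 matrix of size n×n, n ≥ 2, with at most d zeros in each column. Then the Boolean rank of M is at most c(d)·log₂ n, where c(d) = 3e(d+1)/log₂ e. -/
open Function Set

/-!
Sample a random row set `R` containing each row independently with probability `1 / (d + 1)`,
and take the rectangle `R × C(R)`, where `C(R)` is the set of columns that are all ones on `R`.
A one-entry `(a, b)` lies in it as soon as `a ∈ R` and `R` avoids the at most `d` zeros of
column `b`, which happens with probability at least `(1 / (d + 1)) (1 - 1 / (d + 1)) ^ d ≥
1 / (e (d + 1))`. With `⌊3 e (d + 1) ln n⌋` independent samples, a union bound over the at most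
`n²` one-entries leaves failure probability below `e ^ (1/2) / n < 1`, so some choice of samples
gives a cover. The probabilities are phrased as counts of samples.
-/

open Finset

theorem add_one_pow_le_exp_one_mul_pow {d z : ℕ} (hz : z ≤ d) :
    ((d : ℝ) + 1) ^ z ≤ Real.exp 1 * (d : ℝ) ^ z := by
  rcases Nat.eq_zero_or_pos d with rfl | hd
  · obtain rfl : z = 0 := Nat.le_zero.mp hz
    simp
  calc ((d : ℝ) + 1) ^ z = (1 + (d : ℝ)⁻¹) ^ z * (d : ℝ) ^ z := by
        rw [← mul_pow]; congr 1; field_simp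
    _ ≤ (1 + (d : ℝ)⁻¹) ^ d * (d : ℝ) ^ z := by
        gcongr
        exact le_add_of_nonneg_right (by positivity)
    _ ≤ Real.exp 1 * (d : ℝ) ^ z := by gcongr; exact Real.one_add_inv_pow_le_exp

/-- Union bound: for each `k ∈ P` at most `((1 - q) |X|) ^ t` tuples miss `good k` entirely. -/
theorem exists_forall_exists_mem_of_card_mul_pow_lt {κ X : Type*} [Fintype X] [Nonempty X]
    (P : Finset κ) (good : κ → Finset X) {q : ℝ}
    (hgood : ∀ k ∈ P, q * Fintype.card X ≤ #(good k)) {t : ℕ} (hP : #P * (1 - q) ^ t < 1) :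
    ∃ ω : Fin t → X, ∀ k ∈ P, ∃ s, ω s ∈ good k := by
  classical
  set bad : κ → Finset (Fin t → X) := fun k => Fintype.piFinset fun _ => (good k)ᶜ
  have hbad : ∀ k ∈ P, (#(bad k) : ℝ) ≤ ((1 - q) * Fintype.card X) ^ t := by
    intro k hk
    simp only [bad, Fintype.card_piFinset, prod_const, card_univ, Fintype.card_fin, card_compl,
      Nat.cast_pow]
    gcongr
    rw [Nat.cast_sub (card_le_univ _)]; linarith [hgood k hk]
  have hlt : #(P.biUnion bad) < #(univ : Finset (Fin t → X)) := by
    have hX : (0 : ℝ) < Fintype.card X := by exact_mod_cast Fintype.card_pos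
    rw [← Nat.cast_lt (α := ℝ)]
    calc (#(P.biUnion bad) : ℝ) ≤ ∑ k ∈ P, (#(bad k) : ℝ) := by exact_mod_cast card_biUnion_le
      _ ≤ #P * ((1 - q) * Fintype.card X) ^ t := by
        simpa using sum_le_card_nsmul P _ _ hbad
      _ = #P * (1 - q) ^ t * (Fintype.card X : ℝ) ^ t := by rw [mul_pow]; ring
      _ < 1 * (Fintype.card X : ℝ) ^ t := by gcongr
      _ = #(univ : Finset (Fin t → X)) := by simp
  obtain ⟨ω, -, hω⟩ := exists_mem_notMem_of_card_lt_card hlt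
  refine ⟨ω, fun k hk => ?_⟩
  by_contra! hmiss
  exact hω (mem_biUnion.mpr ⟨k, hk, Fintype.mem_piFinset.mpr fun s => mem_compl.mpr (hmiss s)⟩)

section Sampling

variable {ι : Type*} [Fintype ι] [DecidableEq ι]

/-- A sample `σ` stands for the random row set `{i | σ i = 0}`, which contains each row
independently with probability `1 / (d + 1)`; these are the samples whose row set contains
`a` and misses `Z`. -/
def hitSamples (d : ℕ) (a : ι) (Z : Finset ι) : Finset (ι → Fin (d + 1)) :=
  {σ | σ a = 0 ∧ ∀ k ∈ Z, σ k ≠ 0}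

theorem card_hitSamples {d : ℕ} {a : ι} {Z : Finset ι} (ha : a ∉ Z) :
    #(hitSamples d a Z) = d ^ #Z * (d + 1) ^ #({a}ᶜ \ Z) := by
  have hpi : hitSamples d a Z = Fintype.piFinset fun k =>
      if k = a then {0} else if k ∈ Z then univ.erase 0 else univ := by
    ext σ
    simp only [hitSamples, mem_filter, Finset.mem_univ, true_and, Fintype.mem_piFinset]
    constructor
    · rintro ⟨h0, hZ⟩ k
      split_ifs with hka hkZ
      · simp [hka, h0]
      · simp [hZ k hkZ]
      · simp
    · intro h
      refine ⟨by simpa using h a, fun k hk => ?_⟩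
      have hka : k ≠ a := by rintro rfl; exact ha hk
      simpa [hka, hk] using h k
  have hfactor : ∀ k ∈ ({a}ᶜ : Finset ι),
      #(if k = a then {0} else if k ∈ Z then univ.erase 0 else (univ : Finset (Fin (d + 1)))) =
        if k ∈ Z then d else d + 1 := by
    intro k hk
    rw [if_neg (by simpa using hk)]
    split_ifs <;> simp
  have hZ : ({a}ᶜ : Finset ι) ∩ Z = Z := inter_eq_right.mpr fun k hk => by
    simpa using ne_of_mem_of_not_mem hk ha
  rw [hpi, Fintype.card_piFinset, Fintype.prod_eq_mul_prod_compl a, if_pos rfl,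
    Finset.card_singleton, one_mul, prod_congr rfl hfactor, prod_ite, prod_const, prod_const,
    filter_mem_eq_inter, hZ, filter_notMem_eq_sdiff]

theorem pow_card_le_exp_one_mul_card_hitSamples {d : ℕ} {a : ι} {Z : Finset ι} (ha : a ∉ Z)
    (hZ : #Z ≤ d) :
    ((d : ℝ) + 1) ^ Fintype.card ι ≤ Real.exp 1 * (d + 1) * #(hitSamples d a Z) := by
  have hZa : Z ⊆ {a}ᶜ := fun k hk => by simpa using ne_of_mem_of_not_mem hk ha
  have hcard : Fintype.card ι = #({a}ᶜ \ Z) + #Z + 1 := by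
    rw [card_sdiff_add_card_eq_card hZa, ← Finset.card_singleton a, Finset.card_compl_add_card]
  rw [card_hitSamples ha, hcard]
  push_cast
  calc ((d : ℝ) + 1) ^ (#({a}ᶜ \ Z) + #Z + 1)
      = ((d : ℝ) + 1) ^ #Z * ((d + 1) * (d + 1) ^ #({a}ᶜ \ Z)) := by ring
    _ ≤ Real.exp 1 * (d : ℝ) ^ #Z * ((d + 1) * (d + 1) ^ #({a}ᶜ \ Z)) := by
      gcongr; exact add_one_pow_le_exp_one_mul_pow hZ
    _ = _ := by ring

end Sampling

theorem coverNum_le_of_rowSets {α β : Type*} (M : Matrix α β ℤ) {t : ℕ} (R : Fin t → Set α)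
    (hR : ∀ a b, M a b = 1 → ∃ s, a ∈ R s ∧ ∀ i ∈ R s, M i b = 1) : coverNum M ≤ t := by
  refine Nat.sInf_le ⟨fun s => R s ×ˢ {j | ∀ i ∈ R s, M i j = 1},
    fun s => ⟨⟨_, _, rfl⟩, fun p hp => hp.2 p.1 hp.1⟩, ?_⟩
  ext ⟨a, b⟩
  simp only [mem_iUnion, mem_prod, mem_ofPred_eq, onesOf]
  exact ⟨fun ⟨s, ha, hb⟩ => hb a ha, hR a b⟩

theorem natCast_mul_one_sub_inv_pow_floor_lt_one {n m : ℕ} (hn : 2 ≤ n) (hm : m ≤ n ^ 2)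
    {c : ℝ} (hc : 2 ≤ c) : (m : ℝ) * (1 - c⁻¹) ^ ⌊3 * c * Real.log n⌋₊ < 1 := by
  set t := ⌊3 * c * Real.log n⌋₊
  have hn0 : (0 : ℝ) < n := by positivity
  have hlog : 1 / 2 < Real.log n :=
    Real.log_two_gt_d9.trans_le' (by norm_num) |>.trans_le
      (Real.log_le_log (by norm_num) (by exact_mod_cast hn))
  have hc_inv : c⁻¹ ≤ 1 / 2 := by rw [one_div]; exact inv_anti₀ two_pos hc
  have ht : 3 * Real.log n ≤ c⁻¹ * (t + 1) := by
    rw [le_inv_mul_iff₀ (by positivity), ← mul_assoc, mul_comm c]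
    exact (Nat.lt_floor_add_one (3 * c * Real.log n)).le
  calc (m : ℝ) * (1 - c⁻¹) ^ t ≤ Real.exp (Real.log n) ^ 2 * Real.exp (-c⁻¹) ^ t := by
        rw [Real.exp_log hn0]
        have hsub : 0 ≤ 1 - c⁻¹ := by linarith
        gcongr
        · exact_mod_cast hm
        · exact Real.one_sub_le_exp_neg _
    _ = Real.exp (2 * Real.log n - c⁻¹ * t) := by
        rw [← Real.exp_nat_mul, ← Real.exp_nat_mul, ← Real.exp_add]; ring_nf
    _ < 1 := Real.exp_lt_one_iff.mpr (by linarith)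

/-- Let `M` be an `n × n` `0,1` matrix, `n ≥ 2`, with at most `d` zeros in each
column. Then the Boolean rank of `M` is at most `c(d) · log₂ n`, where
`c(d) = 3e(d+1) / log₂ e`. -/
theorem boolRank_le_of_few_zeros {n : ℕ} (hn : 2 ≤ n) (d : ℕ)
    (M : Matrix (Fin n) (Fin n) ℤ) (hM : ZeroOne M)
    (hcol : ∀ j, (Finset.univ.filter fun i => M i j = 0).card ≤ d) :
    (coverNum M : ℝ) ≤
      (3 * Real.exp 1 * (d + 1) / Real.logb 2 (Real.exp 1)) * Real.logb 2 n := by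
  classical
  have hrhs : (3 * Real.exp 1 * (d + 1) / Real.logb 2 (Real.exp 1)) * Real.logb 2 n
      = 3 * (Real.exp 1 * (d + 1)) * Real.log n := by
    rw [Real.logb, Real.logb, Real.log_exp]
    field_simp
  have hc : 2 ≤ Real.exp 1 * (d + 1) := by
    nlinarith [Real.add_one_le_exp (1 : ℝ), (Nat.cast_nonneg d : (0 : ℝ) ≤ d)]
  set ones : Finset (Fin n × Fin n) := {x | M x.1 x.2 = 1}
  have hgood : ∀ x ∈ ones, (Real.exp 1 * (d + 1))⁻¹ * Fintype.card (Fin n → Fin (d + 1))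
      ≤ #(hitSamples d x.1 {i | M i x.2 = 0}) := fun x hx =>
    (inv_mul_le_iff₀ (by positivity)).mpr <| by
      simpa using pow_card_le_exp_one_mul_card_hitSamples (by simp_all [ones]) (hcol x.2)
  obtain ⟨ω, hω⟩ := exists_forall_exists_mem_of_card_mul_pow_lt ones _ hgood
    (natCast_mul_one_sub_inv_pow_floor_lt_one hn ((card_filter_le _ _).trans_eq (by simp [sq])) hc)
  rw [hrhs]
  refine (Nat.cast_le.mpr ?_).trans (Nat.floor_le (by positivity))
  refine coverNum_le_of_rowSets M (fun s => {i | ω s i = 0}) fun a b hab => ?_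
  obtain ⟨s, hs⟩ := hω (a, b) (by simp [ones, hab])
  simp only [hitSamples, mem_filter] at hs
  exact ⟨s, hs.2.1, fun i hi => (hM i b).resolve_left fun h0 => hs.2.2 i (by simp [h0]) hi⟩
end

section
/- Let M be a 0,1 matrix of size n×m, and let G_M be the conflict graph of M: vertices are the positions (i,j) with M_{i,j}=1, and two vertices (i,j), (k,ℓ) are adjacent if M_{i,ℓ}=0 or M_{k,j}=0. Then the chromatic number of G_M equals the Boolean rank of M. -/
open Function Set

/-- The conflict graph of a `0,1` matrix `M`: vertices are the `1`-entries of
`M`, and two distinct `1`-entries `(i,j)`, `(k,ℓ)` are adjacent iff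
`M i ℓ = 0` or `M k j = 0`. -/
def conflictGraph {n m : ℕ} (M : Matrix (Fin n) (Fin m) ℤ) :
    SimpleGraph {p : Fin n × Fin m // M p.1 p.2 = 1} where
  Adj p q := p ≠ q ∧ (M p.1.1 q.1.2 = 0 ∨ M q.1.1 p.1.2 = 0)
  symm := ⟨fun p q h => ⟨h.1.symm, h.2.symm⟩⟩
  loopless := ⟨fun p h => h.1 rfl⟩

/-! A set of `1`-entries lies in a common all-ones rectangle iff its entries pairwise do not
conflict, the rectangle being spanned by their rows and columns. Hence the colour classes of a
proper colouring of the conflict graph span rectangles covering the ones, and conversely colouring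
each `1`-entry by a rectangle containing it is proper. -/

section OnesRect

variable {α β : Type*} {M : Matrix α β ℤ} {S T : Set (α × β)}

lemma IsOnesRect.apply_fst_snd_eq_one (hS : IsOnesRect M S) {p q : α × β} (hp : p ∈ S)
    (hq : q ∈ S) : M p.1 q.2 = 1 := by
  obtain ⟨⟨R, C, rfl⟩, hones⟩ := hS
  exact hones (p.1, q.2) ⟨hp.1, hq.2⟩

lemma isOnesRect_fst_image_prod_snd_image (hT : ∀ p ∈ T, ∀ q ∈ T, M p.1 q.2 = 1) :
    IsOnesRect M ((Prod.fst '' T) ×ˢ (Prod.snd '' T)) := by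
  refine ⟨⟨_, _, rfl⟩, ?_⟩
  rintro ⟨-, -⟩ ⟨⟨p, hp, rfl⟩, ⟨q, hq, rfl⟩⟩
  exact hT p hp q hq

end OnesRect

namespace conflictGraph

variable {n m k : ℕ} {M : Matrix (Fin n) (Fin m) ℤ}

lemma apply_eq_one_of_not_adj (hM : ZeroOne M) {p q : {p : Fin n × Fin m // M p.1 p.2 = 1}}
    (h : ¬(conflictGraph M).Adj p q) : M p.1.1 q.1.2 = 1 := by
  by_cases hpq : p = q
  · exact hpq ▸ p.2
  · exact (hM _ _).resolve_left fun h0 => h ⟨hpq, .inl h0⟩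

lemma colorable_of_cover {f : Fin k → Set (Fin n × Fin m)} (hrect : ∀ t, IsOnesRect M (f t))
    (hcov : ⋃ t, f t = onesOf M) : (conflictGraph M).Colorable k := by
  have hmem (p : {p : Fin n × Fin m // M p.1 p.2 = 1}) : ∃ t, p.1 ∈ f t :=
    mem_iUnion.mp (hcov ▸ p.2)
  choose c hc using hmem
  refine ⟨.mk c fun {p q} hadj hpq => ?_⟩
  have hp := hc p
  have hq := hc q
  rw [hpq] at hp
  rcases hadj.2 with h0 | h0
  · exact one_ne_zero ((hrect _).apply_fst_snd_eq_one hp hq ▸ h0)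
  · exact one_ne_zero ((hrect _).apply_fst_snd_eq_one hq hp ▸ h0)

lemma exists_cover_of_colorable (hM : ZeroOne M) (hc : (conflictGraph M).Colorable k) :
    ∃ f : Fin k → Set (Fin n × Fin m), (∀ t, IsOnesRect M (f t)) ∧ ⋃ t, f t = onesOf M := by
  obtain ⟨C⟩ := hc
  let colorClass (t : Fin k) : Set (Fin n × Fin m) := Subtype.val '' (C ⁻¹' {t})
  have hones (t : Fin k) : ∀ p ∈ colorClass t, ∀ q ∈ colorClass t, M p.1 q.2 = 1 := by
    rintro _ ⟨p, hp, rfl⟩ _ ⟨q, hq, rfl⟩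
    exact apply_eq_one_of_not_adj hM fun hadj => C.valid hadj (hp.trans hq.symm)
  have hrect (t : Fin k) := isOnesRect_fst_image_prod_snd_image (hones t)
  refine ⟨fun t => (Prod.fst '' colorClass t) ×ˢ (Prod.snd '' colorClass t), hrect, ?_⟩
  refine (iUnion_subset fun t => (hrect t).2).antisymm fun x hx => ?_
  exact mem_iUnion.mpr ⟨C ⟨x, hx⟩, subset_fst_image_prod_snd_image ⟨⟨x, hx⟩, rfl, rfl⟩⟩

lemma colorable_iff_exists_cover (hM : ZeroOne M) :
    (conflictGraph M).Colorable k ↔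
      ∃ f : Fin k → Set (Fin n × Fin m), (∀ t, IsOnesRect M (f t)) ∧ ⋃ t, f t = onesOf M :=
  ⟨exists_cover_of_colorable hM, fun ⟨_, hrect, hcov⟩ => colorable_of_cover hrect hcov⟩

end conflictGraph

/-- The chromatic number of the conflict graph of a `0,1` matrix `M` equals the
Boolean rank of `M` (the minimum rectangle cover number). -/
theorem chromaticNumber_conflictGraph {n m : ℕ} (M : Matrix (Fin n) (Fin m) ℤ)
    (hM : ZeroOne M) :
    (conflictGraph M).chromaticNumber = (coverNum M : ℕ∞) := by
  rw [(conflictGraph M).colorable_of_fintype.chromaticNumber_eq_sInf, coverNum]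
  simp only [conflictGraph.colorable_iff_exists_cover hM]
end

section
/- Let A and B be 0,1 matrices. Then the Boolean rank of the Kronecker product A⊗B satisfies: Rbool(A⊗B) ≤ Rbool(A)·Rbool(B), and Rbool(A⊗B) ≥ max{i(A)·Rbool(B), Rbool(A)·i(B)}, where i(·) denotes the maximum size of an isolation set. -/
open Function Set

/-- An isolation set in a `0,1` matrix `M`: a set of `1`-entries, no two sharing a
row or a column, and no two lying in a common all-ones `2 × 2` submatrix. -/
def IsIsolationSet {α β : Type*} (M : Matrix α β ℤ) (F : Set (α × β)) : Prop :=
  (∀ p ∈ F, M p.1 p.2 = 1) ∧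
  ∀ p ∈ F, ∀ q ∈ F, p ≠ q →
    p.1 ≠ q.1 ∧ p.2 ≠ q.2 ∧ ¬(M p.1 q.2 = 1 ∧ M q.1 p.2 = 1)

/-- The maximum size of an isolation set of `M`. -/
noncomputable def isolNum {α β : Type*} (M : Matrix α β ℤ) : ℕ :=
  sSup {k | ∃ F : Finset (α × β), IsIsolationSet M ↑F ∧ F.card = k}

/-!
Products of rectangles covering the ones of `A` and of `B` cover the ones of `A ⊗ B`, which gives
the upper bound. For the lower bound, fix an optimal cover of `A ⊗ B` and an isolation set `F` of
`A`. For `(i, j) ∈ F` the block `(i, j)` of `A ⊗ B` is a copy of `B`, so at least `Rbool(B)`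
rectangles of the cover meet it. A rectangle meeting the blocks of two entries `(i, j)`, `(i', j')`
of `F` would force `A i j' = A i' j = 1`, so these sets of rectangles are pairwise disjoint, and
the cover has at least `i(A) · Rbool(B)` members. The other lower bound follows by symmetry.
-/

open Kronecker

variable {α β γ δ ι κ : Type*}

def IsOnesCover (M : Matrix α β ℤ) (f : ι → Set (α × β)) : Prop :=
  (∀ t, IsOnesRect M (f t)) ∧ ⋃ t, f t = onesOf M

section Cover

variable {M : Matrix α β ℤ} {f : ι → Set (α × β)}

theorem IsOnesCover.comp_surjective {e : κ → ι} (hf : IsOnesCover M f) (he : Surjective e) :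
    IsOnesCover M (f ∘ e) :=
  ⟨fun t => hf.1 (e t), (he.iUnion_comp f).trans hf.2⟩

theorem IsOnesCover.restrict (hf : IsOnesCover M f) {s : Set ι}
    (hs : ∀ t, (f t).Nonempty → t ∈ s) : IsOnesCover M fun t : s => f t := by
  refine ⟨fun t => hf.1 t, ?_⟩
  rw [← hf.2]
  ext x
  simp only [mem_iUnion]
  exact ⟨fun ⟨t, hx⟩ => ⟨t, hx⟩, fun ⟨t, hx⟩ => ⟨⟨t, hs t ⟨x, hx⟩⟩, hx⟩⟩

theorem isOnesCover_singletons (M : Matrix α β ℤ) : IsOnesCover M fun x : onesOf M => {x.1} := by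
  refine ⟨fun x => ⟨⟨{x.1.1}, {x.1.2}, singleton_prod_singleton.symm⟩, ?_⟩, ?_⟩
  · rintro p rfl
    exact x.2
  · ext p
    simp

theorem coverNum_le_card_of_isOnesCover [Fintype ι] (hf : IsOnesCover M f) :
    coverNum M ≤ Fintype.card ι := by
  rw [coverNum]
  exact Nat.sInf_le ⟨_, hf.comp_surjective (Fintype.equivFin ι).symm.surjective⟩

theorem coverNum_le_card_of_nonempty_mem (hf : IsOnesCover M f) {s : Finset ι}
    (hs : ∀ t, (f t).Nonempty → t ∈ s) : coverNum M ≤ s.card := by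
  simpa using coverNum_le_card_of_isOnesCover (hf.restrict (s := ↑s) hs)

theorem exists_isOnesCover_fin_coverNum [Finite α] [Finite β] (M : Matrix α β ℤ) :
    ∃ f : Fin (coverNum M) → Set (α × β), IsOnesCover M f := by
  have hne : {k | ∃ f : Fin k → Set (α × β), IsOnesCover M f}.Nonempty :=
    ⟨_, _, (isOnesCover_singletons M).comp_surjective (Finite.equivFin (onesOf M)).symm.surjective⟩
  exact Nat.sInf_mem hne

end Cover

theorem exists_isIsolationSet_card_isolNum [Finite α] [Finite β] (M : Matrix α β ℤ) :
    ∃ F : Finset (α × β), IsIsolationSet M F ∧ F.card = isolNum M := by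
  have := Fintype.ofFinite (α × β)
  let S := {k | ∃ F : Finset (α × β), IsIsolationSet M F ∧ F.card = k}
  have hne : S.Nonempty := ⟨0, ∅, by simp [IsIsolationSet], rfl⟩
  have hbdd : BddAbove S := ⟨Fintype.card (α × β), by rintro _ ⟨F, -, rfl⟩; exact F.card_le_univ⟩
  exact Nat.sSup_mem hne hbdd

theorem IsOnesRect.preimage_prodMap {M : Matrix α β ℤ} {S : Set (α × β)} (hS : IsOnesRect M S)
    (r : γ → α) (c : δ → β) : IsOnesRect (M.submatrix r c) (Prod.map r c ⁻¹' S) := by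
  obtain ⟨⟨R, C, rfl⟩, hones⟩ := hS
  exact ⟨⟨r ⁻¹' R, c ⁻¹' C, preimage_prod_map_prod r c R C⟩, fun p hp => hones _ hp⟩

theorem IsOnesCover.submatrix {M : Matrix α β ℤ} {f : ι → Set (α × β)} (hf : IsOnesCover M f)
    (r : γ → α) (c : δ → β) : IsOnesCover (M.submatrix r c) fun t => Prod.map r c ⁻¹' f t :=
  ⟨fun t => (hf.1 t).preimage_prodMap r c, by rw [← preimage_iUnion, hf.2]; rfl⟩

theorem coverNum_submatrix_le [Finite α] [Finite β] (M : Matrix α β ℤ) (r : γ → α) (c : δ → β) :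
    coverNum (M.submatrix r c) ≤ coverNum M := by
  obtain ⟨f, hf⟩ := exists_isOnesCover_fin_coverNum M
  simpa using coverNum_le_card_of_isOnesCover (hf.submatrix r c)

theorem IsOnesRect.mk_fst_snd_mem {M : Matrix α β ℤ} {S : Set (α × β)} (hS : IsOnesRect M S)
    {p q : α × β} (hp : p ∈ S) (hq : q ∈ S) : (p.1, q.2) ∈ S := by
  obtain ⟨⟨R, C, rfl⟩, -⟩ := hS
  exact ⟨hp.1, hq.2⟩

theorem ZeroOne.eq_one_of_mul_eq_one {A : Matrix α β ℤ} (hA : ZeroOne A) {i : α} {j : β} {b : ℤ}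
    (h : A i j * b = 1) : A i j = 1 ∧ b = 1 := by
  rcases hA i j with h0 | h1
  · simp [h0] at h
  · exact ⟨h1, by simpa [h1] using h⟩

section Kronecker

variable {A : Matrix α β ℤ} {B : Matrix γ δ ℤ}

def kronProd (S : Set (α × β)) (T : Set (γ × δ)) : Set ((α × γ) × (β × δ)) :=
  {x | (x.1.1, x.2.1) ∈ S ∧ (x.1.2, x.2.2) ∈ T}

theorem kronProd_iUnion (f : ι → Set (α × β)) (g : κ → Set (γ × δ)) :
    kronProd (⋃ s, f s) (⋃ t, g t) = ⋃ st : ι × κ, kronProd (f st.1) (g st.2) := by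
  ext
  simp [kronProd]

theorem IsOnesRect.kronProd {S : Set (α × β)} {T : Set (γ × δ)} (hS : IsOnesRect A S)
    (hT : IsOnesRect B T) : IsOnesRect (A ⊗ₖ B) (kronProd S T) := by
  obtain ⟨⟨R, C, rfl⟩, hA⟩ := hS
  obtain ⟨⟨R', C', rfl⟩, hB⟩ := hT
  refine ⟨⟨R ×ˢ R', C ×ˢ C', ?_⟩, fun x hx => ?_⟩
  · ext
    simp only [_root_.kronProd, mem_ofPred_eq, mem_prod]
    tauto
  · simp [hA _ hx.1, hB _ hx.2]

theorem onesOf_kronecker (hA : ZeroOne A) (B : Matrix γ δ ℤ) :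
    onesOf (A ⊗ₖ B) = kronProd (onesOf A) (onesOf B) := by
  ext x
  refine ⟨hA.eq_one_of_mul_eq_one, fun hx => ?_⟩
  rw [onesOf, mem_ofPred_eq, Matrix.kroneckerMap_apply, show A x.1.1 x.2.1 = 1 from hx.1,
    show B x.1.2 x.2.2 = 1 from hx.2, mul_one]

theorem IsOnesCover.kronecker (hA : ZeroOne A) {f : ι → Set (α × β)} {g : κ → Set (γ × δ)}
    (hf : IsOnesCover A f) (hg : IsOnesCover B g) :
    IsOnesCover (A ⊗ₖ B) fun st : ι × κ => kronProd (f st.1) (g st.2) :=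
  ⟨fun st => (hf.1 _).kronProd (hg.1 _), by rw [← kronProd_iUnion, hf.2, hg.2, onesOf_kronecker hA]⟩

theorem coverNum_kronecker_le [Finite α] [Finite β] [Finite γ] [Finite δ] (hA : ZeroOne A)
    (B : Matrix γ δ ℤ) : coverNum (A ⊗ₖ B) ≤ coverNum A * coverNum B := by
  obtain ⟨f, hf⟩ := exists_isOnesCover_fin_coverNum A
  obtain ⟨g, hg⟩ := exists_isOnesCover_fin_coverNum B
  simpa using coverNum_le_card_of_isOnesCover (hf.kronecker hA hg)

theorem kronecker_submatrix_prodMk (A : Matrix α β ℤ) (B : Matrix γ δ ℤ) (i : α) (j : β) :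
    (A ⊗ₖ B).submatrix (Prod.mk i) (Prod.mk j) = A i j • B := by
  ext
  simp

theorem IsOnesRect.kronecker_eq_one (hA : ZeroOne A) {S : Set ((α × γ) × (β × δ))}
    (hS : IsOnesRect (A ⊗ₖ B) S) {i i' : α} {j j' : β} {k k' : γ} {l l' : δ}
    (h : ((i, k), (j, l)) ∈ S) (h' : ((i', k'), (j', l')) ∈ S) : A i j' = 1 :=
  (hA.eq_one_of_mul_eq_one (hS.2 _ (hS.mk_fst_snd_mem h h'))).1

theorem isolNum_mul_coverNum_le [Finite α] [Finite β] [Finite γ] [Finite δ] (hA : ZeroOne A)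
    (B : Matrix γ δ ℤ) : isolNum A * coverNum B ≤ coverNum (A ⊗ₖ B) := by
  classical
  obtain ⟨f, hf⟩ := exists_isOnesCover_fin_coverNum (A ⊗ₖ B)
  obtain ⟨F, hF, hFcard⟩ := exists_isIsolationSet_card_isolNum A
  let meets (ij : α × β) : Finset (Fin (coverNum (A ⊗ₖ B))) :=
    {t | ∃ kl : γ × δ, ((ij.1, kl.1), (ij.2, kl.2)) ∈ f t}
  have hcard : ∀ ij ∈ F, coverNum B ≤ (meets ij).card := by
    rintro ⟨i, j⟩ hij
    have hblock : (A ⊗ₖ B).submatrix (Prod.mk i) (Prod.mk j) = B := by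
      rw [kronecker_submatrix_prodMk, hF.1 _ hij, one_smul]
    calc coverNum B = coverNum ((A ⊗ₖ B).submatrix (Prod.mk i) (Prod.mk j)) := by rw [hblock]
      _ ≤ (meets (i, j)).card := coverNum_le_card_of_nonempty_mem (hf.submatrix _ _)
        fun t ⟨kl, hkl⟩ => by simpa [meets] using ⟨kl.1, kl.2, hkl⟩
  have hdisj : (F : Set (α × β)).PairwiseDisjoint meets := by
    rintro ⟨i, j⟩ hij ⟨i', j'⟩ hij' hne
    refine Finset.disjoint_left.2 fun t ht ht' => ?_
    obtain ⟨kl, hkl⟩ := (Finset.mem_filter.1 ht).2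
    obtain ⟨kl', hkl'⟩ := (Finset.mem_filter.1 ht').2
    exact (hF.2 _ hij _ hij' hne).2.2
      ⟨(hf.1 t).kronecker_eq_one hA hkl hkl', (hf.1 t).kronecker_eq_one hA hkl' hkl⟩
  calc isolNum A * coverNum B = ∑ _ij ∈ F, coverNum B := by simp [hFcard]
    _ ≤ ∑ ij ∈ F, (meets ij).card := Finset.sum_le_sum hcard
    _ = (F.biUnion meets).card := (Finset.card_biUnion hdisj).symm
    _ ≤ coverNum (A ⊗ₖ B) := (Finset.card_le_univ _).trans_eq (Fintype.card_fin _)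

theorem kronecker_comm_eq_submatrix (A : Matrix α β ℤ) (B : Matrix γ δ ℤ) :
    B ⊗ₖ A = (A ⊗ₖ B).submatrix Prod.swap Prod.swap := by
  ext
  simp [mul_comm]

theorem coverNum_mul_isolNum_le [Finite α] [Finite β] [Finite γ] [Finite δ] (A : Matrix α β ℤ)
    (hB : ZeroOne B) : coverNum A * isolNum B ≤ coverNum (A ⊗ₖ B) :=
  calc coverNum A * isolNum B = isolNum B * coverNum A := mul_comm _ _
    _ ≤ coverNum (B ⊗ₖ A) := isolNum_mul_coverNum_le hB A
    _ ≤ coverNum (A ⊗ₖ B) := kronecker_comm_eq_submatrix A B ▸ coverNum_submatrix_le _ _ _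

end Kronecker

open Kronecker in
/-- For `0,1` matrices `A` and `B`, the Boolean rank of the Kronecker product
satisfies `Rbool(A ⊗ B) ≤ Rbool(A) · Rbool(B)` and
`Rbool(A ⊗ B) ≥ max {i(A) · Rbool(B), Rbool(A) · i(B)}`. -/
theorem boolRank_kronecker_bounds {n m p q : ℕ}
    (A : Matrix (Fin n) (Fin m) ℤ) (B : Matrix (Fin p) (Fin q) ℤ)
    (hA : ZeroOne A) (hB : ZeroOne B) :
    coverNum (A ⊗ₖ B) ≤ coverNum A * coverNum B ∧
    isolNum A * coverNum B ≤ coverNum (A ⊗ₖ B) ∧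
    coverNum A * isolNum B ≤ coverNum (A ⊗ₖ B) :=
  ⟨coverNum_kronecker_le hA B, isolNum_mul_coverNum_le hA B, coverNum_mul_isolNum_le A hB⟩
end
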